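/- arXiv:2408.07646 — 2 statements merged into one kernel-verified Lean document; each statement's English description precedes it below -/
import Mathlib

section
/- Let k ≥ 2, G a graph, and W a face of the total k-cut complex Δₖᵗ(G). Then the link of W in Δₖᵗ(G) equals the total k-cut complex of the induced subgraph G \ W, i.e., lk_{Δₖᵗ(G)}(W) = Δₖᵗ(G[V(G)∖W]). -/
open Finset

attribute [local instance] Classical.propDecidable

variable {V : Type*}

def gridGraph (m n : ℕ) : SimpleGraph (Fin m × Fin n) where
  Adj u v := (u.1 = v.1 ∧ (u.2.1 + 1 = v.2.1 ∨ v.2.1 + 1 = u.2.1)) ∨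
             (u.2 = v.2 ∧ (u.1.1 + 1 = v.1.1 ∨ v.1.1 + 1 = u.1.1))
  symm := by
    refine ⟨fun u v h => ?_⟩
    rcases h with ⟨h1, h2⟩ | ⟨h1, h2⟩
    · exact Or.inl ⟨h1.symm, h2.symm⟩
    · exact Or.inr ⟨h1.symm, h2.symm⟩
  loopless := by
    refine ⟨fun u h => ?_⟩
    rcases h with ⟨-, h | h⟩ | ⟨-, h | h⟩ <;> omega

def IsIndep (G : SimpleGraph V) (S : Finset V) : Prop := ∀ u ∈ S, ∀ v ∈ S, ¬ G.Adj u v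

def totalCutComplex [Fintype V] (G : SimpleGraph V) (k : ℕ) : Set (Finset V) :=
  {σ | ∃ S : Finset V, S ⊆ σᶜ ∧ S.card = k ∧ IsIndep G S}

def cutComplex [Fintype V] (G : SimpleGraph V) (k : ℕ) : Set (Finset V) :=
  {σ | ∃ S : Finset V, S ⊆ σᶜ ∧ S.card = k ∧ ¬ (G.induce (S : Set V)).Connected}

def linkC (K : Set (Finset V)) (W : Finset V) : Set (Finset V) :=
  {τ | τ ∩ W = ∅ ∧ τ ∪ W ∈ K}

def delC (K : Set (Finset V)) (v : V) : Set (Finset V) := {σ ∈ K | v ∉ σ}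

def starC (K : Set (Finset V)) (F : Finset V) : Set (Finset V) := {σ ∈ K | σ ∪ F ∈ K}

def IsFacet (K : Set (Finset V)) (σ : Finset V) : Prop :=
  σ ∈ K ∧ ∀ τ ∈ K, σ ⊆ τ → σ = τ

def geomReal [Fintype V] (K : Set (Finset V)) : Set (V → ℝ) :=
  {f | (∀ v, 0 ≤ f v) ∧ (∑ v, f v) = 1 ∧ ∃ σ ∈ K, ∀ v, f v ≠ 0 → v ∈ σ}

def nSphere (d : ℕ) : Set (EuclideanSpace ℝ (Fin (d + 1))) := Metric.sphere 0 1

noncomputable def spherePt (d : ℕ) : ↥(nSphere d) :=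
  ⟨EuclideanSpace.single 0 1, by simp [nSphere, EuclideanSpace.norm_single]⟩

def wedgeRel (N d : ℕ) (a b : (Σ _ : Fin N, ↥(nSphere d)) ⊕ Unit) : Prop :=
  a = b ∨ ((a = Sum.inr () ∨ ∃ i, a = Sum.inl ⟨i, spherePt d⟩) ∧
           (b = Sum.inr () ∨ ∃ i, b = Sum.inl ⟨i, spherePt d⟩))

def wedgeOfSpheres (N d : ℕ) : Type := Quot (wedgeRel N d)

noncomputable instance (N d : ℕ) : TopologicalSpace (wedgeOfSpheres N d) := by
  unfold wedgeOfSpheres; infer_instance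


/-- The link of a face `W` of the total `k`-cut complex of `G` is the total
`k`-cut complex of the induced subgraph on `V(G) ∖ W`. -/
theorem link_totalCutComplex
    [Fintype V] (G : SimpleGraph V) (k : ℕ) (hk : 2 ≤ k) (W : Finset V)
    (hW : W ∈ totalCutComplex G k) :
    linkC (totalCutComplex G k) W =
      (fun τ : Finset ↥{v : V | v ∉ W} =>
        τ.map ⟨Subtype.val, Subtype.val_injective⟩) ''
        totalCutComplex (G.induce {v : V | v ∉ W}) k := by
  ext τ
  constructor
  · rintro ⟨hdisj, S, hS, hcard, hind⟩
    have hτW : ∀ v ∈ τ, v ∉ W := by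
      intro v hv hvW
      exact (Finset.notMem_empty v) (hdisj ▸ Finset.mem_inter.mpr ⟨hv, hvW⟩)
    have hSW : ∀ v ∈ S, v ∉ τ ∧ v ∉ W := by
      intro v hv
      have := hS hv
      simp only [Finset.mem_compl, Finset.mem_union] at this
      tauto
    refine ⟨τ.subtype (fun v => v ∈ {v : V | v ∉ W}),
      ⟨S.subtype (fun v => v ∈ {v : V | v ∉ W}), ?_, ?_, ?_⟩, ?_⟩
    · intro x hx
      simp only [Finset.mem_subtype] at hx
      simp only [Finset.mem_compl, Finset.mem_subtype]
      exact (hSW x hx).1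
    · rw [Finset.card_subtype, Finset.filter_true_of_mem, hcard]
      intro v hv; exact (hSW v hv).2
    · rintro ⟨u, hu⟩ hu' ⟨v, hv⟩ hv' hadj
      simp only [Finset.mem_subtype] at hu' hv'
      exact hind u hu' v hv' hadj
    · show Finset.map _ (Finset.subtype _ τ) = τ
      ext v
      simp only [Finset.mem_map, Finset.mem_subtype, Function.Embedding.coeFn_mk]
      constructor
      · rintro ⟨⟨x, hx⟩, hxτ, rfl⟩; exact hxτ
      · intro hv; exact ⟨⟨v, hτW v hv⟩, hv, rfl⟩
  · rintro ⟨τ', ⟨S', hS', hcard, hind⟩, rfl⟩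
    constructor
    · rw [Finset.eq_empty_iff_forall_notMem]
      intro v hv
      rw [Finset.mem_inter, Finset.mem_map] at hv
      obtain ⟨⟨⟨x, hx⟩, -, rfl⟩, hvW⟩ := hv
      exact hx hvW
    · refine ⟨S'.map ⟨Subtype.val, Subtype.val_injective⟩, ?_, ?_, ?_⟩
      · intro v hv
        rw [Finset.mem_map] at hv
        obtain ⟨⟨x, hx⟩, hxS, rfl⟩ := hv
        have hxτ := hS' hxS
        simp only [Finset.mem_compl] at hxτ
        simp only [Finset.mem_compl, Finset.mem_union, Finset.mem_map, not_or]
        refine ⟨?_, hx⟩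
        rintro ⟨y, hy, hyx⟩
        exact hxτ ((Function.Embedding.injective _ hyx) ▸ hy)
      · rw [Finset.card_map]; exact hcard
      · intro u hu v hv hadj
        rw [Finset.mem_map] at hu hv
        obtain ⟨a, ha, rfl⟩ := hu
        obtain ⟨b, hb, rfl⟩ := hv
        exact hind a ha b hb hadj
end

section
/- Let k ≥ 2, G a graph, and W ⊆ V(G). If W is a face of the k-cut complex Δₖ(G), then lk_{Δₖ(G)}(W) = Δₖ(G ∖ W); otherwise lk_{Δₖ(G)}(W) is the void complex. -/
open Finset

attribute [local instance] Classical.propDecidable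

variable {V : Type*}

/-! A cut set `S` witnessing `τ ∪ W ∈ Δₖ(G)` avoids `W`, so it is a cut set of `G ∖ W`: the
disconnectedness of `G[S]` does not depend on whether `S` is read in `G` or in `G ∖ W`. Hence the
faces of the link are exactly the faces of `Δₖ(G ∖ W)`, pushed into `V`. If `W` is not a face,
the link is empty since `Δₖ(G)` is closed under taking subsets. -/

namespace SimpleGraph

theorem induce_induce_connected_iff (G : SimpleGraph V) {A : Set V} (s : Set A) :
    ((G.induce A).induce s).Connected ↔ (G.induce (Subtype.val '' s)).Connected :=
  Iso.connected_iff ⟨Equiv.Set.image Subtype.val s Subtype.val_injective, Iff.rfl⟩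

end SimpleGraph

theorem isLowerSet_cutComplex [Fintype V] (G : SimpleGraph V) (k : ℕ) :
    IsLowerSet (cutComplex G k) := by
  rintro σ τ hτσ ⟨S, hS, hcard, hdisc⟩
  exact ⟨S, hS.trans (compl_subset_compl.mpr hτσ), hcard, hdisc⟩

theorem linkC_eq_empty_of_notMem {K : Set (Finset V)} (hK : IsLowerSet K) {W : Finset V}
    (hW : W ∉ K) : linkC K W = ∅ :=
  Set.eq_empty_of_forall_notMem fun _ ⟨_, hτW⟩ => hW (hK subset_union_right hτW)

theorem map_subtype_union_mem_cutComplex_iff [Fintype V] (G : SimpleGraph V) (k : ℕ)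
    (W : Finset V) (σ : Finset ↥{v : V | v ∉ W}) :
    σ.map (Function.Embedding.subtype _) ∪ W ∈ cutComplex G k ↔
      σ ∈ cutComplex (G.induce {v : V | v ∉ W}) k := by
  have hconn (S : Finset ↥{v : V | v ∉ W}) :
      ((G.induce {v : V | v ∉ W}).induce (S : Set _)).Connected ↔
        (G.induce (S.map (Function.Embedding.subtype _) : Set V)).Connected := by
    rw [coe_map]
    exact G.induce_induce_connected_iff _
  constructor
  · rintro ⟨S, hS, hcard, hdisc⟩
    have hSW : ∀ v ∈ S, v ∉ W := fun _ hv hvW => mem_compl.mp (hS hv) (mem_union_right _ hvW)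
    have hSmap : (S.subtype (· ∈ {v : V | v ∉ W})).map (Function.Embedding.subtype _) = S :=
      subtype_map_of_mem hSW
    have hcard' : #(S.subtype (· ∈ {v : V | v ∉ W})) = k := by
      rw [← hcard, ← card_map (Function.Embedding.subtype _), hSmap]
    refine ⟨S.subtype _, fun a ha => ?_, hcard', ?_⟩
    · simp only [mem_compl]
      exact fun haσ =>
        mem_compl.mp (hS (mem_subtype.mp ha)) (mem_union_left _ (mem_map_of_mem _ haσ))
    · rwa [hconn, hSmap]
  · rintro ⟨S, hS, hcard, hdisc⟩
    refine ⟨S.map (Function.Embedding.subtype _), ?_, by rw [card_map, hcard], by rwa [← hconn]⟩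
    intro v hv
    obtain ⟨a, haS, rfl⟩ := mem_map.mp hv
    have haσ : a ∉ σ := by simpa only [mem_compl] using hS haS
    simp only [mem_compl, mem_union, mem_map' (Function.Embedding.subtype _), not_or]
    exact ⟨haσ, a.2⟩

theorem linkC_cutComplex [Fintype V] (G : SimpleGraph V) (k : ℕ) (W : Finset V) :
    linkC (cutComplex G k) W =
      (fun τ : Finset ↥{v : V | v ∉ W} => τ.map (Function.Embedding.subtype _)) ''
        cutComplex (G.induce {v : V | v ∉ W}) k := by
  ext τ
  constructor
  · rintro ⟨hτW, hmem⟩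
    have hτ : (τ.subtype (· ∈ {v : V | v ∉ W})).map (Function.Embedding.subtype _) = τ :=
      subtype_map_of_mem fun v hvτ hvW =>
        (eq_empty_iff_forall_notMem.mp hτW) v (mem_inter.mpr ⟨hvτ, hvW⟩)
    refine ⟨_, (map_subtype_union_mem_cutComplex_iff G k W _).mp ?_, hτ⟩
    rwa [hτ]
  · rintro ⟨σ, hσ, rfl⟩
    have hσW : Disjoint (σ.map (Function.Embedding.subtype _)) W :=
      disjoint_left.mpr fun _ hv => property_of_mem_map_subtype σ hv
    exact ⟨disjoint_iff_inter_eq_empty.mp hσW,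
      (map_subtype_union_mem_cutComplex_iff G k W σ).mpr hσ⟩

theorem link_cutComplex_general
    [Fintype V] (G : SimpleGraph V) (k : ℕ) (W : Finset V) :
    (W ∈ cutComplex G k →
      linkC (cutComplex G k) W =
        (fun τ : Finset ↥{v : V | v ∉ W} =>
          τ.map ⟨Subtype.val, Subtype.val_injective⟩) ''
          cutComplex (G.induce {v : V | v ∉ W}) k) ∧
    (W ∉ cutComplex G k → linkC (cutComplex G k) W = ∅) :=
  ⟨fun _ => linkC_cutComplex G k W, linkC_eq_empty_of_notMem (isLowerSet_cutComplex G k)⟩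

/-- For the `k`-cut complex: the link of `W` is the `k`-cut complex of `G ∖ W`
when `W` is a face, and is void otherwise. -/
theorem link_cutComplex
    [Fintype V] (G : SimpleGraph V) (k : ℕ) (hk : 2 ≤ k) (W : Finset V) :
    (W ∈ cutComplex G k →
      linkC (cutComplex G k) W =
        (fun τ : Finset ↥{v : V | v ∉ W} =>
          τ.map ⟨Subtype.val, Subtype.val_injective⟩) ''
          cutComplex (G.induce {v : V | v ∉ W}) k) ∧
    (W ∉ cutComplex G k → linkC (cutComplex G k) W = ∅) :=
  link_cutComplex_general G k W
end
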